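/- For every permutation π of {1,2,…,n}, the transposition distance of π satisfies td(π) ≥ (n + 1 − c_odd(overline(π))) / 2, where c_odd(overline(π)) is the number of odd-length cycles (including fixed points) of the permutation overline(π) of {0,1,…,n}. -/

import Mathlib

/-- The (n+1)-cycle (0,1,2,…,n) on {0,1,…,n} = `Fin (n+1)`, mapping x to x+1 (mod n+1). -/
def rho (n : ℕ) : Equiv.Perm (Fin (n + 1)) :=
  finRotate (n + 1)

/-- For a permutation `π` of {0,1,…,n} fixing 0 (the extension of a permutation of {1,…,n}),
`ob n π` is `overline(π) = ρ ∘ β_π`, where `β_π = π ∘ ρ⁻¹ ∘ π⁻¹` is precisely the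
(n+1)-cycle (0, π_n, π_{n−1}, …, π_1): it sends 0 ↦ π_n, π_i ↦ π_{i−1} (2 ≤ i ≤ n),
and π_1 ↦ 0. -/
def ob (n : ℕ) (π : Equiv.Perm (Fin (n + 1))) : Equiv.Perm (Fin (n + 1)) :=
  rho n * (π * (rho n)⁻¹ * π⁻¹)

/-- `IsGRTransposition n i j l τ` says that `τ` (a permutation of {0,1,…,n} fixing 0,
representing a permutation of {1,…,n}) is the (genome-rearrangement) transposition
τ(i,j,l) with 1 ≤ i < j < l ≤ n+1, i.e. its one-line notation on positions 1,…,n is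
⟨1,…,i−1, j,…,l−1, i,…,j−1, l,…,n⟩. -/
def IsGRTransposition (n i j l : ℕ) (τ : Equiv.Perm (Fin (n + 1))) : Prop :=
  1 ≤ i ∧ i < j ∧ j < l ∧ l ≤ n + 1 ∧
  (∀ p : Fin (n + 1), (p : ℕ) < i → τ p = p) ∧
  (∀ p : Fin (n + 1), i ≤ (p : ℕ) → (p : ℕ) < i + (l - j) →
      (τ p : ℕ) = j + ((p : ℕ) - i)) ∧
  (∀ p : Fin (n + 1), i + (l - j) ≤ (p : ℕ) → (p : ℕ) < l →
      (τ p : ℕ) = i + ((p : ℕ) - (i + (l - j)))) ∧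
  (∀ p : Fin (n + 1), l ≤ (p : ℕ) → τ p = p)

/-- The number of fixed points c₁(σ) of a permutation σ. -/
def fixedPointCount {m : ℕ} (σ : Equiv.Perm (Fin m)) : ℕ :=
  (Finset.univ.filter fun x => σ x = x).card

/-- The number of cycles c(σ) of a permutation σ, counting fixed points as 1-cycles
(`Equiv.Perm.cycleType` lists the lengths of the cycles of length ≥ 2). -/
def cycleCount {m : ℕ} (σ : Equiv.Perm (Fin m)) : ℕ :=
  σ.cycleType.card + fixedPointCount σ

/-- The number of odd-length cycles c_odd(σ) of a permutation σ, counting fixed points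
as (odd) 1-cycles. -/
def oddCycleCount {m : ℕ} (σ : Equiv.Perm (Fin m)) : ℕ :=
  (σ.cycleType.filter fun k => Odd k).card + fixedPointCount σ

/-- `τ` is a transposition τ(i,j,l) for some 1 ≤ i < j < l ≤ n+1. -/
def IsGRTranspositionPerm (n : ℕ) (τ : Equiv.Perm (Fin (n + 1))) : Prop :=
  ∃ i j l : ℕ, IsGRTransposition n i j l τ

/-- The transposition distance: the least t such that π is a product of t
transpositions τ(i,j,l). -/
noncomputable def td (n : ℕ) (π : Equiv.Perm (Fin (n + 1))) : ℕ :=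
  sInf {t | ∃ L : List (Equiv.Perm (Fin (n + 1))), L.length = t ∧
    (∀ g ∈ L, IsGRTranspositionPerm n g) ∧ L.prod = π}

/-!
Give each point of an odd cycle of length `ℓ` the weight `1 / ℓ` and every other point weight
`0`; the total weight is then `c_odd`, and it is computed point by point from minimal periods.
Composing with a transposition `(u v)` only touches the cycles through `u` and `v`: if they are
different, of lengths `p` and `q`, they merge and `p % 2 + q % 2` becomes `(p + q) % 2`; if they
coincide, the cycle splits, which is the inverse operation. Hence one transposition lowers `c_odd`
by at most 2, and a 3-cycle `(a b)(b c)` does too: to lose 2 the first factor must merge two odd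
cycles into an even one, and then the second factor can lose nothing more.

Since `overline(τ π)` is `overline(τ)` times a conjugate of `overline(π)`, and `overline(τ)` is a
3-cycle for every transposition `τ(i,j,l)`, each transposition lowers `c_odd(overline(·))` by at
most 2, while `c_odd(overline(id)) = c_odd(id) = n + 1`.
-/

open Equiv Equiv.Perm Finset Function

noncomputable def oddInv (ℓ : ℕ) : ℚ := if Odd ℓ then (ℓ : ℚ)⁻¹ else 0

lemma natCast_mul_oddInv (ℓ : ℕ) : (ℓ : ℚ) * oddInv ℓ = (ℓ % 2 : ℕ) := by
  rcases Nat.even_or_odd ℓ with h | h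
  · simp [oddInv, Nat.not_odd_iff_even.2 h, Nat.even_iff.1 h]
  · have : (ℓ : ℚ) ≠ 0 := by exact_mod_cast h.pos.ne'
    simp [oddInv, h, Nat.odd_iff.1 h, this]

lemma oddInv_one : oddInv 1 = 1 := by simp [oddInv]

namespace Equiv.Perm

variable {α : Type*} {σ : Perm α} {u v x y : α}

lemma sameCycle_iterate_right (σ : Perm α) (x : α) (k : ℕ) : σ.SameCycle x (σ^[k] x) :=
  ⟨k, by simp [coe_pow]⟩

lemma minimalPeriod_mul_of_apply_eq_self {f g : Perm α} (hfg : Commute f g) (hg : g x = x) :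
    minimalPeriod (f * g) x = minimalPeriod f x :=
  minimalPeriod_eq_minimalPeriod_iff.2 fun k => by
    simp only [IsPeriodicPt, IsFixedPt, ← coe_pow, hfg.mul_pow, Perm.mul_apply,
      pow_apply_eq_self_of_apply_eq_self hg]

section Finite

variable [Finite α]

lemma minimalPeriod_pos (σ : Perm α) (x : α) : 0 < minimalPeriod σ x :=
  minimalPeriod_pos_of_mem_periodicPts (σ.injective.mem_periodicPts x)

lemma SameCycle.minimalPeriod_eq (h : σ.SameCycle x y) :
    minimalPeriod σ y = minimalPeriod σ x := by
  obtain ⟨k, rfl⟩ := h.exists_nat_pow_eq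
  rw [coe_pow, minimalPeriod_apply_iterate (σ.injective.mem_periodicPts x)]

end Finite

section DecidableEq

variable [DecidableEq α]

noncomputable def orbitFinset (σ : Perm α) (x : α) : Finset α :=
  (range (minimalPeriod σ x)).image fun k => σ^[k] x

lemma card_orbitFinset (σ : Perm α) (x : α) : #(σ.orbitFinset x) = minimalPeriod σ x := by
  rw [orbitFinset, card_image_of_injOn, card_range]
  intro i hi j hj
  exact iterate_injOn_Iio_minimalPeriod (by simpa using hi) (by simpa using hj)

lemma iterate_swap_mul_apply {k : ℕ} (h : ∀ i < k, σ^[i + 1] x ≠ u ∧ σ^[i + 1] x ≠ v) :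
    (swap u v * σ)^[k] x = σ^[k] x := by
  induction k with
  | zero => rfl
  | succ k ih =>
    rw [iterate_succ_apply', ih fun i hi => h i (by omega), Perm.mul_apply,
      ← iterate_succ_apply' σ, swap_apply_of_ne_of_ne (h k k.lt_succ_self).1
        (h k k.lt_succ_self).2]

lemma minimalPeriod_swap_mul_eq_of_not_sameCycle (hu : ¬σ.SameCycle u x)
    (hv : ¬σ.SameCycle v x) : minimalPeriod (swap u v * σ) x = minimalPeriod σ x := by
  have avoid (k : ℕ) : (swap u v * σ)^[k] x = σ^[k] x := iterate_swap_mul_apply fun i _ =>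
    ⟨fun h => hu (h ▸ σ.sameCycle_iterate_right x (i + 1)).symm,
      fun h => hv (h ▸ σ.sameCycle_iterate_right x (i + 1)).symm⟩
  exact minimalPeriod_eq_minimalPeriod_iff.2 fun k => by
    simp only [IsPeriodicPt, IsFixedPt, avoid]

variable [Finite α]

lemma mem_orbitFinset : y ∈ σ.orbitFinset x ↔ σ.SameCycle x y := by
  simp only [orbitFinset, mem_image, mem_range]
  refine ⟨fun ⟨k, _, hk⟩ => hk ▸ σ.sameCycle_iterate_right x k, fun h => ?_⟩
  obtain ⟨k, rfl⟩ := h.exists_nat_pow_eq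
  exact ⟨k % minimalPeriod σ x, Nat.mod_lt _ (σ.minimalPeriod_pos x),
    by rw [iterate_mod_minimalPeriod_eq, coe_pow]⟩

lemma sum_oddInv_orbitFinset (σ : Perm α) (x : α) :
    ∑ y ∈ σ.orbitFinset x, oddInv (minimalPeriod σ y) = (minimalPeriod σ x % 2 : ℕ) := by
  rw [sum_congr rfl fun y hy => by rw [(mem_orbitFinset.1 hy).minimalPeriod_eq], sum_const,
    card_orbitFinset, nsmul_eq_mul, natCast_mul_oddInv]

lemma disjoint_orbitFinset_of_not_sameCycle (h : ¬σ.SameCycle u v) :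
    _root_.Disjoint (σ.orbitFinset u) (σ.orbitFinset v) :=
  disjoint_left.2 fun _ hu hv => h ((mem_orbitFinset.1 hu).trans (mem_orbitFinset.1 hv).symm)

lemma iterate_swap_mul_apply_of_not_sameCycle (h : ¬σ.SameCycle u v) :
    (∀ k < minimalPeriod σ u, (swap u v * σ)^[k] u = σ^[k] u) ∧
      (swap u v * σ)^[minimalPeriod σ u] u = v := by
  have avoid : ∀ i < minimalPeriod σ u - 1, σ^[i + 1] u ≠ u ∧ σ^[i + 1] u ≠ v := fun i hi =>
    ⟨not_isPeriodicPt_of_pos_of_lt_minimalPeriod i.succ_ne_zero (by omega),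
      fun hv => h (hv ▸ σ.sameCycle_iterate_right u (i + 1))⟩
  refine ⟨fun k hk => iterate_swap_mul_apply fun i hi => avoid i (by omega), ?_⟩
  obtain ⟨m, hm⟩ : ∃ m, minimalPeriod σ u = m + 1 :=
    ⟨_, (Nat.succ_pred_eq_of_pos (σ.minimalPeriod_pos u)).symm⟩
  have hret : σ (σ^[m] u) = u := by
    rw [← iterate_succ_apply' σ, Nat.succ_eq_add_one, ← hm, iterate_minimalPeriod]
  rw [hm, iterate_succ_apply', iterate_swap_mul_apply fun i hi => avoid i (by omega),
    Perm.mul_apply, hret, swap_apply_left]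

lemma orbitFinset_union_subset_of_not_sameCycle (h : ¬σ.SameCycle u v) :
    σ.orbitFinset u ∪ σ.orbitFinset v ⊆ (swap u v * σ).orbitFinset u := by
  obtain ⟨hu, huv⟩ := iterate_swap_mul_apply_of_not_sameCycle h
  obtain ⟨hv, -⟩ := iterate_swap_mul_apply_of_not_sameCycle (mt SameCycle.symm h)
  rw [swap_comm] at hv
  intro y hy
  simp only [mem_union, orbitFinset, mem_image, mem_range] at hy
  rw [mem_orbitFinset]
  rcases hy with ⟨k, hk, rfl⟩ | ⟨k, hk, rfl⟩
  · rw [← hu k hk]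
    exact sameCycle_iterate_right _ _ _
  · have hk' : (swap u v * σ)^[k + minimalPeriod σ u] u = σ^[k] v := by
      rw [iterate_add_apply, huv, hv k hk]
    exact hk' ▸ sameCycle_iterate_right _ _ _

lemma minimalPeriod_swap_mul_eq_add (h : ¬σ.SameCycle u v) :
    minimalPeriod (swap u v * σ) u = minimalPeriod σ u + minimalPeriod σ v := by
  refine le_antisymm ?_ ?_
  · obtain ⟨-, huv⟩ := iterate_swap_mul_apply_of_not_sameCycle h
    obtain ⟨-, hvu⟩ := iterate_swap_mul_apply_of_not_sameCycle (mt SameCycle.symm h)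
    rw [swap_comm] at hvu
    refine IsPeriodicPt.minimalPeriod_le (by have := σ.minimalPeriod_pos u; omega) ?_
    rw [IsPeriodicPt, IsFixedPt, add_comm, iterate_add_apply, huv, hvu]
  · calc minimalPeriod σ u + minimalPeriod σ v = #(σ.orbitFinset u ∪ σ.orbitFinset v) := by
          rw [card_union_of_disjoint (disjoint_orbitFinset_of_not_sameCycle h),
            card_orbitFinset, card_orbitFinset]
      _ ≤ _ := (card_le_card (orbitFinset_union_subset_of_not_sameCycle h)).trans_eq
          (card_orbitFinset _ _)

lemma not_sameCycle_swap_mul_of_sameCycle (huv : u ≠ v) (h : σ.SameCycle u v) :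
    ¬(swap u v * σ).SameCycle u v := by
  obtain ⟨d, hd, rfl⟩ : ∃ d < minimalPeriod σ u, σ^[d] u = v := by
    simpa [orbitFinset] using mem_orbitFinset.2 h
  obtain ⟨e, rfl⟩ : ∃ e, d = e + 1 :=
    Nat.exists_eq_succ_of_ne_zero (by rintro rfl; exact huv rfl)
  -- the new orbit of `u` is `u, σ u, …, σ^[e] u`, which misses `σ^[e + 1] u`
  have agree : ∀ k ≤ e, (swap u (σ^[e + 1] u) * σ)^[k] u = σ^[k] u := fun k hk =>
    iterate_swap_mul_apply fun i hi =>
      ⟨not_isPeriodicPt_of_pos_of_lt_minimalPeriod i.succ_ne_zero (by omega), fun heq => by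
        have := (iterate_eq_iterate_iff_of_lt_minimalPeriod (by omega) hd).1 heq
        omega⟩
  have hret : IsPeriodicPt (swap u (σ^[e + 1] u) * σ) (e + 1) u := by
    rw [IsPeriodicPt, IsFixedPt, iterate_succ_apply', agree e le_rfl, Perm.mul_apply,
      ← iterate_succ_apply' σ, swap_apply_right]
  intro hs
  obtain ⟨k, hk⟩ := hs.exists_nat_pow_eq
  have hmod : k % (e + 1) < e + 1 := Nat.mod_lt k e.succ_pos
  rw [coe_pow, ← hret.iterate_mod_apply, agree _ (by omega)] at hk
  have := (iterate_eq_iterate_iff_of_lt_minimalPeriod (by omega) hd).1 hk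
  omega

end DecidableEq

noncomputable def oddWeight [Fintype α] (σ : Perm α) : ℚ := ∑ x, oddInv (minimalPeriod σ x)

variable [Fintype α] [DecidableEq α]

lemma oddWeight_add_card_support (σ : Perm α) :
    oddWeight σ + #σ.support = Multiset.card (σ.cycleType.filter Odd) + Fintype.card α := by
  have fixed : ∀ {τ : Perm α} {x}, τ x = x → oddInv (minimalPeriod τ x) = 1 := fun h => by
    rw [minimalPeriod_eq_one_iff_isFixedPt.2 h, oddInv_one]
  induction σ using cycle_induction_on with
  | base_one => simp [oddWeight, oddInv_one]
  | base_cycles σ hσ =>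
    have period : ∀ x ∈ σ.support, minimalPeriod σ x = #σ.support := fun x hx => by
      rw [← card_orbitFinset]
      congr 1
      ext y
      rw [mem_orbitFinset, (isCycle_iff_sameCycle (mem_support.1 hx)).1 hσ, mem_support]
    have odd_count :
        Multiset.card (({#σ.support} : Multiset ℕ).filter Odd) = #σ.support % 2 := by
      simp only [Multiset.filter_singleton, Nat.odd_iff]
      split_ifs <;> simp <;> omega
    have on_fixed : ∑ x ∈ σ.supportᶜ, oddInv (minimalPeriod σ x) = #σ.supportᶜ := by
      rw [sum_congr rfl fun x hx => fixed (by simpa using hx)]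
      simp
    have on_support : ∑ x ∈ σ.support, oddInv (minimalPeriod σ x) = (#σ.support % 2 : ℕ) := by
      rw [sum_congr rfl fun x hx => by rw [period x hx], sum_const, nsmul_eq_mul,
        natCast_mul_oddInv]
    rw [oddWeight, ← sum_compl_add_sum σ.support, on_fixed, on_support, hσ.cycleType, odd_count,
      ← card_compl_add_card σ.support]
    push_cast
    ring
  | induction_disjoint f g hfg _ hf hg =>
    have pointwise : ∀ x, oddInv (minimalPeriod (f * g) x) + 1 =
        oddInv (minimalPeriod f x) + oddInv (minimalPeriod g x) := fun x => by
      rcases hfg x with hfx | hgx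
      · rw [hfg.commute.eq, minimalPeriod_mul_of_apply_eq_self hfg.commute.symm hfx, fixed hfx,
          add_comm]
      · rw [minimalPeriod_mul_of_apply_eq_self hfg.commute hgx, fixed hgx]
    have total : oddWeight (f * g) + Fintype.card α = oddWeight f + oddWeight g := by
      rw [oddWeight, oddWeight, oddWeight, ← sum_add_distrib,
        ← sum_congr rfl fun x _ => pointwise x, sum_add_distrib]
      simp
    rw [hfg.cycleType_mul, Multiset.filter_add, Multiset.card_add, hfg.card_support_mul]
    push_cast
    linarith

lemma oddWeight_swap_mul_of_not_sameCycle (h : ¬σ.SameCycle u v) :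
    oddWeight (swap u v * σ) + (minimalPeriod σ u % 2 : ℕ) + (minimalPeriod σ v % 2 : ℕ) =
      oddWeight σ + ((minimalPeriod σ u + minimalPeriod σ v) % 2 : ℕ) := by
  set C := σ.orbitFinset u ∪ σ.orbitFinset v
  have outside : ∀ x ∈ Cᶜ,
      oddInv (minimalPeriod (swap u v * σ) x) = oddInv (minimalPeriod σ x) := by
    intro x hx
    simp only [C, mem_compl, mem_union, mem_orbitFinset, not_or] at hx
    rw [minimalPeriod_swap_mul_eq_of_not_sameCycle hx.1 hx.2]
  have inside : ∑ x ∈ C, oddInv (minimalPeriod (swap u v * σ) x) =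
      ((minimalPeriod σ u + minimalPeriod σ v) % 2 : ℕ) := by
    rw [sum_congr rfl fun x hx => by
        rw [(mem_orbitFinset.1 (orbitFinset_union_subset_of_not_sameCycle h hx)).minimalPeriod_eq,
          minimalPeriod_swap_mul_eq_add h],
      sum_const, card_union_of_disjoint (disjoint_orbitFinset_of_not_sameCycle h),
      card_orbitFinset, card_orbitFinset, nsmul_eq_mul, natCast_mul_oddInv]
  have before : ∑ x ∈ C, oddInv (minimalPeriod σ x) =
      (minimalPeriod σ u % 2 : ℕ) + (minimalPeriod σ v % 2 : ℕ) := by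
    rw [sum_union (disjoint_orbitFinset_of_not_sameCycle h), sum_oddInv_orbitFinset,
      sum_oddInv_orbitFinset]
  rw [oddWeight, oddWeight, ← sum_compl_add_sum C, ← sum_compl_add_sum C, sum_congr rfl outside,
    inside, before]
  ring

lemma oddWeight_le_swap_mul_of_sameCycle (huv : u ≠ v) (h : σ.SameCycle u v) :
    oddWeight σ ≤ oddWeight (swap u v * σ) := by
  have key := oddWeight_swap_mul_of_not_sameCycle (not_sameCycle_swap_mul_of_sameCycle huv h)
  rw [swap_mul_self_mul] at key
  generalize minimalPeriod (swap u v * σ) u = p, minimalPeriod (swap u v * σ) v = q at key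
  have : (((p + q) % 2 : ℕ) : ℚ) ≤ (p % 2 : ℕ) + (q % 2 : ℕ) := by exact_mod_cast (by omega)
  linarith

lemma oddWeight_le_swap_mul_add_two (huv : u ≠ v) :
    oddWeight σ ≤ oddWeight (swap u v * σ) + 2 := by
  by_cases h : σ.SameCycle u v
  · linarith [oddWeight_le_swap_mul_of_sameCycle huv h]
  · have key := oddWeight_swap_mul_of_not_sameCycle h
    generalize minimalPeriod σ u = p, minimalPeriod σ v = q at key
    have : ((p % 2 : ℕ) : ℚ) + (q % 2 : ℕ) ≤ ((p + q) % 2 : ℕ) + 2 := by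
      exact_mod_cast (by omega)
    linarith

lemma oddWeight_le_swap_mul_swap_mul_add_two {a b c : α} (hab : a ≠ b) (hbc : b ≠ c) :
    oddWeight σ ≤ oddWeight (swap a b * (swap b c * σ)) + 2 := by
  by_cases hσ : σ.SameCycle b c
  · exact (oddWeight_le_swap_mul_of_sameCycle hbc hσ).trans (oddWeight_le_swap_mul_add_two hab)
  have first := oddWeight_swap_mul_of_not_sameCycle hσ
  by_cases hσ₁ : (swap b c * σ).SameCycle a b
  · have second := oddWeight_le_swap_mul_of_sameCycle hab hσ₁
    generalize minimalPeriod σ b = p, minimalPeriod σ c = q at first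
    have : ((p % 2 : ℕ) : ℚ) + (q % 2 : ℕ) ≤ ((p + q) % 2 : ℕ) + 2 := by
      exact_mod_cast (by omega)
    linarith
  · have second := oddWeight_swap_mul_of_not_sameCycle hσ₁
    rw [minimalPeriod_swap_mul_eq_add hσ] at second
    generalize minimalPeriod (swap b c * σ) a = r, minimalPeriod σ b = p,
      minimalPeriod σ c = q at first second
    have : ((r % 2 : ℕ) : ℚ) + (p % 2 : ℕ) + (q % 2 : ℕ) ≤ ((r + (p + q)) % 2 : ℕ) + 2 := by
      exact_mod_cast (by omega)
    linarith

end Equiv.Perm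

section OddCycleCount

variable {m : ℕ}

lemma fixedPointCount_add_card_support (σ : Perm (Fin m)) :
    fixedPointCount σ + #σ.support = m := by
  have h := card_compl_add_card σ.support
  rw [Fintype.card_fin] at h
  convert h using 2
  rw [fixedPointCount]
  congr 1
  ext
  simp

lemma oddCycleCount_eq_oddWeight (σ : Perm (Fin m)) : (oddCycleCount σ : ℚ) = σ.oddWeight := by
  have h₁ := σ.oddWeight_add_card_support
  have h₂ : (fixedPointCount σ : ℚ) + #σ.support = m := by
    exact_mod_cast fixedPointCount_add_card_support σ
  rw [Fintype.card_fin] at h₁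
  rw [oddCycleCount]
  push_cast
  linarith

lemma oddCycleCount_conj (σ τ : Perm (Fin m)) :
    oddCycleCount (τ * σ * τ⁻¹) = oddCycleCount σ := by
  have h₁ := fixedPointCount_add_card_support σ
  have h₂ := fixedPointCount_add_card_support (τ * σ * τ⁻¹)
  rw [card_support_conj] at h₂
  rw [oddCycleCount, oddCycleCount, cycleType_conj]
  omega

lemma oddCycleCount_one : oddCycleCount (1 : Perm (Fin m)) = m := by
  simp [oddCycleCount, fixedPointCount]

end OddCycleCount

lemma ob_one (n : ℕ) : ob n 1 = 1 := by
  simp [ob]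

lemma ob_mul (n : ℕ) (σ τ : Perm (Fin (n + 1))) :
    ob n (σ * τ) = ob n σ * (σ * ob n τ * σ⁻¹) := by
  simp only [ob]
  group

lemma ob_apply_apply (n : ℕ) (τ : Perm (Fin (n + 1))) (q : Fin (n + 1)) :
    ob n τ (τ q) = τ (q - 1) + 1 := by
  simp [ob, rho, Perm.mul_apply]

namespace IsGRTransposition

variable {n i j l : ℕ} {τ : Perm (Fin (n + 1))}

lemma val_apply (h : IsGRTransposition n i j l τ) (q : Fin (n + 1)) :
    (τ q : ℕ) = if (q : ℕ) < i then (q : ℕ) else if (q : ℕ) < i + (l - j) then j + (q - i)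
      else if (q : ℕ) < l then i + (q - (i + (l - j))) else q := by
  obtain ⟨-, -, -, -, h₁, h₂, h₃, h₄⟩ := h
  split_ifs with ha hb hc
  · rw [h₁ q ha]
  · exact h₂ q (by omega) hb
  · exact h₃ q (by omega) hc
  · rw [h₄ q (by omega)]

lemma ob_eq_swap_mul_swap (h : IsGRTransposition n i j l τ) :
    ∃ a b c : Fin (n + 1), a ≠ b ∧ b ≠ c ∧ ob n τ = swap a b * swap b c := by
  obtain ⟨hi, hij, hjl, hl, -⟩ := id h
  obtain ⟨L, hL⟩ : ∃ L : Fin (n + 1), (L : ℕ) = l ∧ l ≤ n ∨ (L : ℕ) = 0 ∧ l = n + 1 := by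
    rcases Nat.lt_or_ge l (n + 1) with hl' | hl'
    exacts [⟨⟨l, hl'⟩, .inl ⟨rfl, by omega⟩⟩, ⟨0, .inr ⟨rfl, by omega⟩⟩]
  set I : Fin (n + 1) := ⟨i, by omega⟩
  set J : Fin (n + 1) := ⟨j, by omega⟩
  set M : Fin (n + 1) := ⟨i + (l - j), by omega⟩
  -- by `ob_apply_apply`, `ob n τ` fixes `τ q` unless `q` is one of the breakpoints `I`, `M`, `L`
  have shift : ∀ q, q ≠ I → q ≠ M → q ≠ L → τ (q - 1) + 1 = τ q := by
    intro q hqI hqM hqL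
    simp only [ne_eq, Fin.ext_iff, I, M] at hqI hqM hqL
    rw [Fin.ext_iff]
    simp only [Fin.val_add_one, Fin.coe_sub_one, h.val_apply, Fin.ext_iff, Fin.val_last,
      Fin.val_zero]
    split_ifs <;> omega
  obtain ⟨τI, τM, τL, shiftI, shiftM, shiftL⟩ : τ I = J ∧ τ M = I ∧ τ L = L ∧
      τ (I - 1) + 1 = I ∧ τ (M - 1) + 1 = L ∧ τ (L - 1) + 1 = J := by
    refine ⟨?_, ?_, ?_, ?_, ?_, ?_⟩ <;>
    · rw [Fin.ext_iff]
      simp only [I, J, M, Fin.val_add_one, Fin.coe_sub_one, h.val_apply, Fin.ext_iff,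
        Fin.val_last, Fin.val_zero]
      split_ifs <;> omega
  have hJI : J ≠ I := by simp [Fin.ext_iff, I, J]; omega
  have hIL : I ≠ L := by simp [Fin.ext_iff, I]; omega
  have hJL : J ≠ L := by simp [Fin.ext_iff, J]; omega
  refine ⟨J, I, L, hJI, hIL, Equiv.ext fun y => ?_⟩
  obtain ⟨q, rfl⟩ := τ.surjective y
  rw [ob_apply_apply, Perm.mul_apply]
  by_cases hqI : q = I
  · rw [hqI, τI, shiftI, swap_apply_of_ne_of_ne hJI hJL, swap_apply_left]
  by_cases hqM : q = M
  · rw [hqM, τM, shiftM, swap_apply_left, swap_apply_of_ne_of_ne hJL.symm hIL.symm]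
  by_cases hqL : q = L
  · rw [hqL, τL, shiftL, swap_apply_right, swap_apply_right]
  have neI : τ q ≠ I := τM ▸ fun e => hqM (τ.injective e)
  have neJ : τ q ≠ J := τI ▸ fun e => hqI (τ.injective e)
  have neL : τ q ≠ L := τL ▸ fun e => hqL (τ.injective e)
  rw [shift q hqI hqM hqL, swap_apply_of_ne_of_ne neI neL, swap_apply_of_ne_of_ne neJ neI]

end IsGRTransposition

lemma isGRTransposition_swap {n r : ℕ} (hr : 1 ≤ r) (hrn : r < n) :
    IsGRTransposition n r (r + 1) (r + 2) (swap ⟨r, by omega⟩ ⟨r + 1, by omega⟩) := by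
  refine ⟨hr, by omega, by omega, by omega, ?_, ?_, ?_, ?_⟩ <;> intro p <;>
    simp only [swap_apply_def, Fin.ext_iff] <;> split_ifs <;> simp <;> omega

section FixingZero

variable {n : ℕ}

lemma coe_finSuccAboveEquiv_zero (k : Fin n) :
    (finSuccAboveEquiv 0 k : Fin (n + 1)) = k.succ := by
  simp [finSuccAboveEquiv_apply]

lemma extendDomain_finSuccAboveEquiv_apply_zero (σ : Perm (Fin n)) :
    σ.extendDomain (finSuccAboveEquiv 0) 0 = 0 :=
  extendDomain_apply_not_subtype _ _ (by simp)

lemma extendDomain_finSuccAboveEquiv_apply_succ (σ : Perm (Fin n)) (k : Fin n) :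
    σ.extendDomain (finSuccAboveEquiv 0) k.succ = (σ k).succ := by
  rw [← coe_finSuccAboveEquiv_zero, extendDomain_apply_image, coe_finSuccAboveEquiv_zero]

lemma extendDomain_finSuccAboveEquiv_swap (a b : Fin n) :
    (swap a b).extendDomain (finSuccAboveEquiv 0) = swap a.succ b.succ := by
  ext x
  cases x using Fin.cases with
  | zero => rw [extendDomain_finSuccAboveEquiv_apply_zero,
      swap_apply_of_ne_of_ne (Fin.succ_ne_zero a).symm (Fin.succ_ne_zero b).symm]
  | succ c => rw [extendDomain_finSuccAboveEquiv_apply_succ, (Fin.succ_injective n).swap_apply]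

lemma exists_extendDomain_finSuccAboveEquiv_eq {π : Perm (Fin (n + 1))} (hπ : π 0 = 0) :
    ∃ σ : Perm (Fin n), σ.extendDomain (finSuccAboveEquiv 0) = π := by
  refine ⟨(finSuccAboveEquiv 0).symm.permCongr (π.subtypePerm fun x => π.injective.ne_iff' hπ),
    Equiv.ext fun x => ?_⟩
  cases x using Fin.cases with
  | zero => rw [extendDomain_finSuccAboveEquiv_apply_zero, hπ]
  | succ c =>
    rw [extendDomain_finSuccAboveEquiv_apply_succ, permCongr_apply, symm_symm,
      ← coe_finSuccAboveEquiv_zero, apply_symm_apply, subtypePerm_apply]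
    simp only [coe_finSuccAboveEquiv_zero]

lemma mem_closure_isGRTranspositionPerm {π : Perm (Fin (n + 1))} (hπ : π 0 = 0) :
    π ∈ Submonoid.closure {τ | IsGRTranspositionPerm n τ} := by
  obtain ⟨σ, rfl⟩ := exists_extendDomain_finSuccAboveEquiv_eq hπ
  cases n with
  | zero => rw [Subsingleton.elim σ 1, extendDomain_one]; exact one_mem _
  | succ m =>
    have adjacent : Submonoid.closure (Set.range fun k : Fin m => swap k.castSucc k.succ) ≤
        (Submonoid.closure {τ | IsGRTranspositionPerm (m + 1) τ}).comap
          (extendDomainHom (finSuccAboveEquiv 0)) := by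
      refine Submonoid.closure_le.2 (Set.range_subset_iff.2 fun k => Submonoid.subset_closure ?_)
      simp only [extendDomainHom_apply, extendDomain_finSuccAboveEquiv_swap]
      exact ⟨_, _, _, isGRTransposition_swap (r := k + 1) (by omega) (by omega)⟩
    exact adjacent (mclosure_swap_castSucc_succ m ▸ Submonoid.mem_top σ)

lemma exists_list_length_eq_td {π : Perm (Fin (n + 1))} (hπ : π 0 = 0) :
    ∃ L : List (Perm (Fin (n + 1))), L.length = td n π ∧
      (∀ τ ∈ L, IsGRTranspositionPerm n τ) ∧ L.prod = π := by
  obtain ⟨L, hL, hprod⟩ :=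
    Submonoid.exists_list_of_mem_closure (mem_closure_isGRTranspositionPerm hπ)
  exact Nat.sInf_mem (s := {t | ∃ L : List (Perm (Fin (n + 1))), L.length = t ∧
    (∀ τ ∈ L, IsGRTranspositionPerm n τ) ∧ L.prod = π}) ⟨L.length, L, rfl, hL, hprod⟩

end FixingZero

lemma oddCycleCount_ob_le_ob_mul {n : ℕ} {τ : Perm (Fin (n + 1))}
    (hτ : IsGRTranspositionPerm n τ) (σ : Perm (Fin (n + 1))) :
    oddCycleCount (ob n σ) ≤ oddCycleCount (ob n (τ * σ)) + 2 := by
  obtain ⟨i, j, l, h⟩ := hτ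
  obtain ⟨a, b, c, hab, hbc, hτ⟩ := h.ob_eq_swap_mul_swap
  have key := (τ * ob n σ * τ⁻¹).oddWeight_le_swap_mul_swap_mul_add_two hab hbc
  rw [← oddCycleCount_eq_oddWeight, ← oddCycleCount_eq_oddWeight, oddCycleCount_conj,
    ← mul_assoc, ← hτ, ← ob_mul] at key
  exact_mod_cast key

lemma le_oddCycleCount_ob_list_prod {n : ℕ} (L : List (Perm (Fin (n + 1))))
    (hL : ∀ τ ∈ L, IsGRTranspositionPerm n τ) :
    n + 1 ≤ oddCycleCount (ob n L.prod) + 2 * L.length := by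
  induction L with
  | nil => simp [ob_one, oddCycleCount_one]
  | cons τ L ih =>
    have step := oddCycleCount_ob_le_ob_mul (hL τ List.mem_cons_self) L.prod
    have := ih fun g hg => hL g (List.mem_cons_of_mem τ hg)
    rw [List.prod_cons, List.length_cons]
    omega

/-- for every permutation π of {1,…,n} (extended to {0,…,n} by fixing 0),
td(π) ≥ (n + 1 − c_odd(overline(π))) / 2. -/
theorem td_lower_bound (n : ℕ) (π : Equiv.Perm (Fin (n + 1))) (hπ : π 0 = 0) :
    ((n : ℚ) + 1 - oddCycleCount (ob n π)) / 2 ≤ (td n π : ℚ) := by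
  obtain ⟨L, hlen, hL, rfl⟩ := exists_list_length_eq_td hπ
  have key : ((n + 1 : ℕ) : ℚ) ≤ (oddCycleCount (ob n L.prod) + 2 * L.length : ℕ) := by
    exact_mod_cast le_oddCycleCount_ob_list_prod L hL
  rw [hlen] at key
  push_cast at key
  linarith
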